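/- Correctness of the call-site case-split transformation: replacing a statement s with 'if ⋆ then s' else (s; assume false)' preserves failing executions exactly, provided s' is obtained from s by replacing every 'assert p' with 'assume p' (so s' never fails and its ok-executions coincide with the ok-executions of s). Formally, the transformed statement is equi-safe with s. -/

import Mathlib

abbrev Var := String
abbrev State := Var → ℤ

inductive Outcome | fail | assumeViolation | ok
deriving DecidableEq

inductive Stmt
  | skip
  | assign (v : Var) (e : State → ℤ)
  | assertS (p : State → Prop)
  | assumeS (p : State → Prop)
  | seq (s₁ s₂ : Stmt)
  | ite (s₁ s₂ : Stmt)

inductive Exec : Stmt → State → Outcome → State → Prop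
  | skip {σ} : Exec .skip σ .ok σ
  | assign {σ v e} : Exec (.assign v e) σ .ok (Function.update σ v (e σ))
  | assertOk {σ p} : p σ → Exec (.assertS p) σ .ok σ
  | assertFail {σ p} : ¬ p σ → Exec (.assertS p) σ .fail σ
  | assumeOk {σ p} : p σ → Exec (.assumeS p) σ .ok σ
  | assumeViol {σ p} : ¬ p σ → Exec (.assumeS p) σ .assumeViolation σ
  | seqOk {s₁ s₂ σ σ₁ φ σ₂} : Exec s₁ σ .ok σ₁ → Exec s₂ σ₁ φ σ₂ → Exec (.seq s₁ s₂) σ φ σ₂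
  | seqAbort {s₁ s₂ σ φ σ₁} : Exec s₁ σ φ σ₁ → φ ≠ .ok → Exec (.seq s₁ s₂) σ φ σ₁
  | iteL {s₁ s₂ σ φ σ'} : Exec s₁ σ φ σ' → Exec (.ite s₁ s₂) σ φ σ'
  | iteR {s₁ s₂ σ φ σ'} : Exec s₂ σ φ σ' → Exec (.ite s₁ s₂) σ φ σ'

def EquiSafe (s s' : Stmt) : Prop :=
  ∀ σ σ', Exec s σ .fail σ' ↔ Exec s' σ .fail σ'

def Trimmed (s s' : Stmt) : Prop :=
  EquiSafe s s' ∧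
  (∀ σ σ', Exec s σ .ok σ' →
     Exec s' σ .ok σ' ∨ ∃ σ'', Exec s' σ .assumeViolation σ'') ∧
  (∀ σ σ', Exec s σ .assumeViolation σ' → ∃ σ'', Exec s' σ .assumeViolation σ'')

namespace Exec

theorem ite_iff {s₁ s₂ : Stmt} {σ σ' : State} {φ : Outcome} :
    Exec (.ite s₁ s₂) σ φ σ' ↔ Exec s₁ σ φ σ' ∨ Exec s₂ σ φ σ' := by
  constructor
  · intro h
    cases h with
    | iteL h => exact .inl h
    | iteR h => exact .inr h
  · rintro (h | h)
    exacts [.iteL h, .iteR h]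

theorem not_fail_assumeS (p : State → Prop) (σ σ' : State) :
    ¬ Exec (.assumeS p) σ .fail σ' := by
  rintro ⟨⟩

theorem seq_fail_iff_of_not_fail {s t : Stmt} (ht : ∀ σ σ', ¬ Exec t σ .fail σ')
    {σ σ' : State} : Exec (.seq s t) σ .fail σ' ↔ Exec s σ .fail σ' := by
  constructor
  · intro h
    cases h with
    | seqOk _ htFail => exact absurd htFail (ht _ _)
    | seqAbort hsFail _ => exact hsFail
  · exact fun hs => .seqAbort hs Outcome.noConfusion

end Exec

theorem case_split_equiSafe_general (s s' : Stmt)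
    (hnofail : ∀ σ σ', ¬ Exec s' σ .fail σ') :
    ∀ σ σ',
      Exec (.ite s' (.seq s (.assumeS fun _ => False))) σ .fail σ' ↔
      Exec s σ .fail σ' := by
  intro σ σ'
  rw [Exec.ite_iff, Exec.seq_fail_iff_of_not_fail (Exec.not_fail_assumeS _)]
  exact ⟨fun h => h.resolve_left (hnofail σ σ'), Or.inr⟩

/-- Correctness of the call-site case-split transformation: if s' never fails
and has the same ok-executions as s, then 'if ⋆ then s' else (s; assume false)'
is equi-safe with s. -/
theorem case_split_equiSafe (s s' : Stmt)
    (hnofail : ∀ σ σ', ¬ Exec s' σ .fail σ')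
    (hok : ∀ σ σ', Exec s σ .ok σ' ↔ Exec s' σ .ok σ') :
    ∀ σ σ',
      Exec (.ite s' (.seq s (.assumeS fun _ => False))) σ .fail σ' ↔
      Exec s σ .fail σ' :=
  case_split_equiSafe_general s s' hnofail
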